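/- arXiv:2211.07829 — 2 statements merged into one kernel-verified Lean document; each statement's English description precedes it below -/
import Mathlib

section
/- Let 0 < ε < 1/2 and 0 < p ≤ ε^4. Let e be an element and N a finite set not containing e, and let q_{e'} ∈ [0, p] for each e' ∈ N ∪ {e}, with Σ_{e' ∈ N} q_{e'} ≤ 2 and q_e ≤ ε^2 · p. Let Q be a random subset of N ∪ {e} containing each element e' independently with probability q_{e'}/p, and let R be an independent random subset of N ∪ {e} containing each element independently with probability p. Then Pr[ Q ∩ R ∩ N = ∅ | e ∉ Q ] ≥ (1 − 4ε)/e^2 − ε^2. -/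
open Finset

noncomputable section

variable {E : Type*} [Fintype E] [DecidableEq E]

/-- Probability that an independent-inclusion random subset of `E`, in which each element `e`
is included independently with probability `π e`, is exactly the set `A`. -/
def prodWeight (π : E → ℝ) (A : Finset E) : ℝ :=
  (∏ e ∈ A, π e) * ∏ e ∈ Aᶜ, (1 - π e)

/-- Expectation of `g` under the independent-inclusion random subset with marginals `π`. -/
def expec (π : E → ℝ) (g : Finset E → ℝ) : ℝ :=
  ∑ A : Finset E, prodWeight π A * g A

/-- Total (additive) weight of a finite set. -/
def setWeight (w : E → ℝ) (T : Finset E) : ℝ := ∑ e ∈ T, w e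

/-- Value of a best feasible (w.r.t. `𝓘`) subset of `S`, for the objective `f`. -/
def bestVal (𝓘 : Set (Finset E)) (f : Finset E → ℝ) (S : Finset E) : ℝ :=
  sSup (f '' {T | T ⊆ S ∧ T ∈ 𝓘})

/-- Sum over all subsets of a product-form functional factorizes. -/
lemma sum_prodWeight_mul_prod (π h : E → ℝ) :
    ∑ A : Finset E, prodWeight π A * ∏ a ∈ A, h a = ∏ a, (π a * h a + (1 - π a)) := by
  rw [Finset.prod_add, Finset.powerset_univ]
  apply Finset.sum_congr rfl
  intro A _
  rw [prodWeight, Finset.compl_eq_univ_sdiff, Finset.prod_mul_distrib]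
  ring

/-- For `0 ≤ x ≤ c < 1`, `exp (-(x/(1-c))) ≤ 1 - x`. -/
lemma exp_neg_div_le_one_sub {x c : ℝ} (hx0 : 0 ≤ x) (hc : x ≤ c) (hc1 : c < 1) :
    Real.exp (-(x / (1 - c))) ≤ 1 - x := by
  have h1 : 0 < 1 - x := by linarith
  have h1c : 0 < 1 - c := by linarith
  have h2 := Real.log_le_sub_one_of_pos (show (0:ℝ) < (1 - x)⁻¹ by positivity)
  rw [Real.log_inv] at h2
  have h3 : (1 - x)⁻¹ - 1 = x / (1 - x) := by field_simp; ring
  have h4 : x / (1 - x) ≤ x / (1 - c) := by gcongr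
  have h5 : -(x / (1 - c)) ≤ Real.log (1 - x) := by
    rw [h3] at h2; linarith
  calc Real.exp (-(x / (1 - c))) ≤ Real.exp (Real.log (1 - x)) := Real.exp_le_exp.mpr h5
    _ = 1 - x := Real.exp_log h1

/-- The analytic product lower bound. -/
lemma analytic_bound {α : Type*} [DecidableEq α] (ε : ℝ) (hε0 : 0 < ε) (hε1 : ε < 1 / 2)
    (s : Finset α) (q : α → ℝ) (hq0 : ∀ a, 0 ≤ q a) (hqp : ∀ a, q a ≤ ε ^ 4)
    (hsum : ∑ a ∈ s, q a ≤ 2) :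
    (1 - 4 * ε) / Real.exp 1 ^ 2 - ε ^ 2 ≤ ∏ a ∈ s, (1 - q a) := by
  have hc1 : ε ^ 4 < 1 := by
    have := pow_lt_one₀ hε0.le (by linarith : ε < 1) (by norm_num : (4:ℕ) ≠ 0)
    linarith
  have h1c : 0 < 1 - ε ^ 4 := by linarith
  have step1 : Real.exp (-(∑ a ∈ s, q a / (1 - ε ^ 4))) ≤ ∏ a ∈ s, (1 - q a) := by
    rw [← Finset.sum_neg_distrib, Real.exp_sum]
    exact Finset.prod_le_prod (fun a _ => (Real.exp_pos _).le)
      (fun a _ => exp_neg_div_le_one_sub (hq0 a) (hqp a) hc1)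
  have step2 : Real.exp (-(2 / (1 - ε ^ 4))) ≤ Real.exp (-(∑ a ∈ s, q a / (1 - ε ^ 4))) := by
    apply Real.exp_le_exp.mpr
    rw [← Finset.sum_div]
    have : (∑ a ∈ s, q a) / (1 - ε ^ 4) ≤ 2 / (1 - ε ^ 4) := by gcongr
    linarith
  have step3 : (1 - 4 * ε) / Real.exp 1 ^ 2 - ε ^ 2 ≤ Real.exp (-(2 / (1 - ε ^ 4))) := by
    have he2 : Real.exp 1 ^ 2 = Real.exp 2 := by
      rw [← Real.exp_nat_mul]; norm_num
    have hsplit : Real.exp (-(2 / (1 - ε ^ 4))) =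
        Real.exp (-2) * Real.exp (-(2 * ε ^ 4 / (1 - ε ^ 4))) := by
      rw [← Real.exp_add]; congr 1; field_simp; ring
    have hlin : 1 - 2 * ε ^ 4 / (1 - ε ^ 4) ≤ Real.exp (-(2 * ε ^ 4 / (1 - ε ^ 4))) := by
      have := Real.add_one_le_exp (-(2 * ε ^ 4 / (1 - ε ^ 4)))
      linarith
    have hexp2pos : (0:ℝ) < Real.exp (-2) := Real.exp_pos _
    have hsmall : 2 * ε ^ 4 / (1 - ε ^ 4) ≤ 4 * ε := by
      rw [div_le_iff₀ h1c]
      have h3 : ε ^ 3 < 1 / 8 := by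
        have := pow_lt_pow_left₀ hε1 hε0.le (by norm_num : (3:ℕ) ≠ 0)
        norm_num at this
        linarith
      nlinarith [mul_pos hε0 (pow_pos hε0 3)]
    have hineq : (1 - 4 * ε) ≤ 1 - 2 * ε ^ 4 / (1 - ε ^ 4) := by linarith
    have hexple : Real.exp (-2) = 1 / Real.exp 1 ^ 2 := by
      rw [he2, Real.exp_neg]; ring
    have hsq : (0:ℝ) ≤ ε ^ 2 := by positivity
    calc (1 - 4 * ε) / Real.exp 1 ^ 2 - ε ^ 2
        ≤ (1 - 4 * ε) / Real.exp 1 ^ 2 := by linarith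
      _ = Real.exp (-2) * (1 - 4 * ε) := by rw [hexple]; ring
      _ ≤ Real.exp (-2) * (1 - 2 * ε ^ 4 / (1 - ε ^ 4)) :=
          mul_le_mul_of_nonneg_left hineq hexp2pos.le
      _ ≤ Real.exp (-2) * Real.exp (-(2 * ε ^ 4 / (1 - ε ^ 4))) :=
          mul_le_mul_of_nonneg_left hlin hexp2pos.le
      _ = Real.exp (-(2 / (1 - ε ^ 4))) := hsplit.symm
  linarith

/-- For a non-crucial edge `e₀` with neighborhood `N = univ ∖ {e₀}`:
if `Q` includes each element `e'` independently with probability `q_{e'}/p` and `R` is an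
independent `p`-random subset, with `0 ≤ q ≤ p ≤ ε⁴`, `∑_{e' ∈ N} q_{e'} ≤ 2` and
`q_{e₀} ≤ ε² p`, then `Pr[Q ∩ R ∩ N = ∅ ∣ e₀ ∉ Q] ≥ (1 − 4ε)/e² − ε²`
(stated in product form against `Pr[e₀ ∉ Q] = 1 − q_{e₀}/p`). -/
theorem stmt_18 {α : Type*} [Fintype α] [DecidableEq α]
    (ε p : ℝ) (hε0 : 0 < ε) (hε1 : ε < 1 / 2)
    (hp0 : 0 < p) (hp : p ≤ ε ^ 4)
    (e₀ : α) (q : α → ℝ)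
    (hq0 : ∀ a, 0 ≤ q a) (hqp : ∀ a, q a ≤ p)
    (hqsum : ∑ a ∈ Finset.univ.erase e₀, q a ≤ 2)
    (hqe : q e₀ ≤ ε ^ 2 * p) :
    ((1 - 4 * ε) / Real.exp 1 ^ 2 - ε ^ 2) * (1 - q e₀ / p) ≤
      ∑ QA : Finset α, ∑ RA : Finset α,
        (prodWeight (fun a => q a / p) QA * prodWeight (fun _ => p) RA) *
          (if QA ∩ RA ∩ Finset.univ.erase e₀ = ∅ ∧ e₀ ∉ QA then 1 else 0) := by
  set N := Finset.univ.erase e₀ with hN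
  -- Step 1: compute the inner sum for each fixed QA.
  have inner : ∀ QA : Finset α,
      ∑ RA : Finset α, (prodWeight (fun a => q a / p) QA * prodWeight (fun _ => p) RA) *
          (if QA ∩ RA ∩ N = ∅ ∧ e₀ ∉ QA then (1:ℝ) else 0) =
      prodWeight (fun a => q a / p) QA * ∏ a ∈ QA, (if a = e₀ then 0 else (1 - p)) := by
    intro QA
    have hind : ∀ RA : Finset α, (if QA ∩ RA ∩ N = ∅ ∧ e₀ ∉ QA then (1:ℝ) else 0) =
        (if e₀ ∈ QA then 0 else 1) * ∏ a ∈ RA, (if a ∈ QA ∩ N then (0:ℝ) else 1) := by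
      intro RA
      by_cases he : e₀ ∈ QA
      · simp [he]
      · rw [if_neg he, one_mul]
        by_cases hemp : QA ∩ RA ∩ N = ∅
        · rw [if_pos ⟨hemp, he⟩, eq_comm]
          apply Finset.prod_eq_one
          intro a ha
          rw [if_neg]
          intro hm
          rw [Finset.mem_inter] at hm
          have : a ∈ QA ∩ RA ∩ N := by
            rw [Finset.mem_inter, Finset.mem_inter]
            exact ⟨⟨hm.1, ha⟩, hm.2⟩
          rw [hemp] at this
          exact absurd this (Finset.notMem_empty a)
        · rw [if_neg (by tauto), eq_comm]
          obtain ⟨a, ha⟩ := Finset.nonempty_iff_ne_empty.mpr hemp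
          rw [Finset.mem_inter, Finset.mem_inter] at ha
          exact Finset.prod_eq_zero ha.1.2
            (by rw [if_pos (Finset.mem_inter.mpr ⟨ha.1.1, ha.2⟩)])
    calc ∑ RA : Finset α, (prodWeight (fun a => q a / p) QA * prodWeight (fun _ => p) RA) *
            (if QA ∩ RA ∩ N = ∅ ∧ e₀ ∉ QA then (1:ℝ) else 0)
        = prodWeight (fun a => q a / p) QA * ((if e₀ ∈ QA then 0 else 1) *
            ∑ RA : Finset α, prodWeight (fun _ => p) RA *
              ∏ a ∈ RA, (if a ∈ QA ∩ N then (0:ℝ) else 1)) := by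
          rw [Finset.mul_sum, Finset.mul_sum]
          apply Finset.sum_congr rfl
          intro RA _
          rw [hind RA]; ring
      _ = prodWeight (fun a => q a / p) QA * ((if e₀ ∈ QA then 0 else 1) *
            ∏ a ∈ QA ∩ N, (1 - p)) := by
          rw [sum_prodWeight_mul_prod]
          congr 2
          calc (∏ a : α, (p * (if a ∈ QA ∩ N then (0:ℝ) else 1) + (1 - p)))
              = ∏ a : α, (if a ∈ QA ∩ N then (1 - p) else 1) := by
                apply Finset.prod_congr rfl
                intro a _
                split <;> ring
            _ = ∏ a ∈ Finset.univ ∩ (QA ∩ N), (1 - p) := Finset.prod_ite_mem _ _ _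
            _ = ∏ a ∈ QA ∩ N, (1 - p) := by rw [Finset.univ_inter]
      _ = prodWeight (fun a => q a / p) QA * ∏ a ∈ QA, (if a = e₀ then 0 else (1 - p)) := by
          congr 1
          by_cases he : e₀ ∈ QA
          · rw [if_pos he, zero_mul, eq_comm]
            exact Finset.prod_eq_zero he (by rw [if_pos rfl])
          · have hQN : QA ∩ N = QA := by
              apply Finset.inter_eq_left.mpr
              intro a ha
              refine Finset.mem_erase.mpr ⟨?_, Finset.mem_univ a⟩
              rintro rfl
              exact he ha
            rw [if_neg he, one_mul, hQN]
            apply Finset.prod_congr rfl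
            intro a ha
            have hne : a ≠ e₀ := by rintro rfl; exact he ha
            rw [if_neg hne]
  -- Step 2: total sum in product form.
  have total : (∑ QA : Finset α, ∑ RA : Finset α,
        (prodWeight (fun a => q a / p) QA * prodWeight (fun _ => p) RA) *
          (if QA ∩ RA ∩ N = ∅ ∧ e₀ ∉ QA then (1:ℝ) else 0)) =
      (1 - q e₀ / p) * ∏ a ∈ N, (1 - q a) := by
    rw [Finset.sum_congr rfl (fun QA _ => inner QA), sum_prodWeight_mul_prod,
      ← Finset.mul_prod_erase Finset.univ _ (Finset.mem_univ e₀), ← hN]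
    congr 1
    · rw [if_pos rfl]; ring
    · apply Finset.prod_congr rfl
      intro a ha
      have hae : a ≠ e₀ := Finset.ne_of_mem_erase ha
      rw [if_neg hae]
      field_simp
      ring
  rw [total]
  have hq0' : q e₀ / p ≤ ε ^ 2 := (div_le_iff₀ hp0).mpr hqe
  have hsq : ε ^ 2 < 1 := by nlinarith
  have hnn : 0 ≤ 1 - q e₀ / p := by linarith
  rw [mul_comm (1 - q e₀ / p)]
  apply mul_le_mul_of_nonneg_right _ hnn
  exact analytic_bound ε hε0 hε1 N q hq0 (fun a => le_trans (hqp a) hp) hqsum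
end
end

section
/- Let U be a finite universe, E a finite index set, and A : E → 2^U a family of subsets of U defining the coverage function f(S) = | ⋃_{i ∈ S} A_i | for S ⊆ E. Let (E, 𝓘) be a downward-closed set system with rank r = max{|S| : S ∈ 𝓘}, let p ∈ (0,1], and suppose P_𝓘 admits a c-balanced monotone contention resolution scheme. Let R be a random subset of E containing each element independently with probability p. Then there exists a random subset Q ⊆ E, independent of R, with E[|Q|] ≤ r/p, such that E[ max{ f(T) : T ⊆ Q ∩ R, T ∈ 𝓘 } ] ≥ c · (1 − 1/e) · E[ max{ f(T) : T ⊆ R, T ∈ 𝓘 } ]. -/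
open Finset

noncomputable section

variable {E : Type*} [Fintype E] [DecidableEq E]

/-- The polytope `P_𝓘`: the convex hull of indicator vectors of feasible sets. -/
def systemPolytope (𝓘 : Set (Finset E)) : Set (E → ℝ) :=
  convexHull ℝ ((fun (I : Finset E) (e : E) => if e ∈ I then (1 : ℝ) else 0) '' 𝓘)

/-- A contention resolution scheme for the set system `𝓘`: `out x A B` is the probability
that on input marginals `x` and active set `A` the scheme outputs the set `B`. -/
structure CRS (E : Type*) [Fintype E] [DecidableEq E] (𝓘 : Set (Finset E)) where
  out : (E → ℝ) → Finset E → Finset E → ℝ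
  nonneg : ∀ x A B, 0 ≤ out x A B
  sum_one : ∀ x A, ∑ B : Finset E, out x A B = 1
  subset_of : ∀ x A B, out x A B ≠ 0 → B ⊆ A
  indep_of : ∀ x A B, out x A B ≠ 0 → B ∈ 𝓘

/-- `π.selProb x A e` is the probability that `e` belongs to the output of the scheme `π`
on input `(x, A)`. -/
def CRS.selProb {𝓘 : Set (Finset E)} (π : CRS E 𝓘) (x : E → ℝ) (A : Finset E) (e : E) : ℝ :=
  ∑ B : Finset E, if e ∈ B then π.out x A B else 0

/-- `π` is `c`-balanced: for every `x ∈ P_𝓘` and every element `e` with `x e > 0`,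
`Pr[e ∈ π_x(R(x))] ≥ c · x e`, i.e. `Pr[e ∈ π_x(R(x)) ∣ e ∈ R(x)] ≥ c`. -/
def CRS.Balanced {𝓘 : Set (Finset E)} (π : CRS E 𝓘) (c : ℝ) : Prop :=
  ∀ x ∈ systemPolytope 𝓘, ∀ e : E, 0 < x e →
    c * x e ≤ expec x fun A => π.selProb x A e

/-- `π` is a monotone scheme: `Pr[e ∈ π_x(A₁)] ≥ Pr[e ∈ π_x(A₂)]` whenever `e ∈ A₁ ⊆ A₂`. -/
def CRS.MonotoneScheme {𝓘 : Set (Finset E)} (π : CRS E 𝓘) : Prop :=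
  ∀ x : E → ℝ, ∀ A₁ A₂ : Finset E, A₁ ⊆ A₂ → ∀ e ∈ A₁,
    π.selProb x A₂ e ≤ π.selProb x A₁ e


namespace Sparsify

set_option linter.unusedSectionVars false
set_option linter.unusedVariables false

def wgt (a b : E → ℝ) (s A : Finset E) : ℝ := ∏ i ∈ s, if i ∈ A then a i else b i

lemma wgt_nonneg {a b : E → ℝ} (ha : ∀ i, 0 ≤ a i) (hb : ∀ i, 0 ≤ b i) (s A : Finset E) :
    0 ≤ wgt a b s A :=
  Finset.prod_nonneg fun i _ => by by_cases h : i ∈ A <;> simp [h, ha i, hb i]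

lemma sum_wgt_insert (a b : E → ℝ) {e : E} {t : Finset E} (he : e ∉ t) (g : Finset E → ℝ) :
    ∑ A ∈ (insert e t).powerset, wgt a b (insert e t) A * g A
      = a e * ∑ A ∈ t.powerset, wgt a b t A * g (insert e A)
        + b e * ∑ A ∈ t.powerset, wgt a b t A * g A := by
  have hdis : Disjoint t.powerset (t.powerset.image (insert e)) := by
    rw [Finset.disjoint_left]
    intro A hA hA'
    obtain ⟨B, hB, rfl⟩ := Finset.mem_image.1 hA'
    exact he (Finset.mem_powerset.1 hA (Finset.mem_insert_self e B))
  have hinj : ∀ B ∈ t.powerset, ∀ B' ∈ t.powerset, insert e B = insert e B' → B = B' := by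
    intro B hB B' hB' hBB'
    have heB : e ∉ B := fun hc => he (Finset.mem_powerset.1 hB hc)
    have heB' : e ∉ B' := fun hc => he (Finset.mem_powerset.1 hB' hc)
    rw [← Finset.erase_insert heB, ← Finset.erase_insert heB', hBB']
  rw [Finset.powerset_insert, Finset.sum_union hdis, Finset.sum_image hinj,
    Finset.mul_sum, Finset.mul_sum]
  rw [add_comm]
  congr 1
  · refine Finset.sum_congr rfl fun A hA => ?_
    have heA : e ∉ A := fun hc => he (Finset.mem_powerset.1 hA hc)
    rw [wgt, Finset.prod_insert he, if_pos (Finset.mem_insert_self e A), wgt, mul_assoc]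
    congr 2
    refine Finset.prod_congr rfl fun i hi => ?_
    have hne : i ≠ e := fun h => he (h ▸ hi)
    simp [Finset.mem_insert, hne]
  · exact Finset.sum_congr rfl fun A hA => by
      have heA : e ∉ A := fun hc => he (Finset.mem_powerset.1 hA hc)
      rw [wgt, Finset.prod_insert he, if_neg heA, wgt, mul_assoc]

lemma sum_wgt (a b : E → ℝ) (s : Finset E) :
    ∑ A ∈ s.powerset, wgt a b s A = ∏ i ∈ s, (a i + b i) := by
  induction s using Finset.induction_on with
  | empty => simp [wgt]
  | @insert e t he ih =>
    have h1 : ∀ (u : Finset E), ∑ A ∈ u.powerset, wgt a b u A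
        = ∑ A ∈ u.powerset, wgt a b u A * (fun _ => (1:ℝ)) A := by
      intro u; simp
    rw [h1, sum_wgt_insert a b he (fun _ => (1:ℝ))]
    simp only [mul_one]
    rw [ih, Finset.prod_insert he]
    ring

lemma harris (x : E → ℝ) (hx0 : ∀ i, 0 ≤ x i) (hx1 : ∀ i, x i ≤ 1)
    (s : Finset E) (h m : Finset E → ℝ)
    (hh : ∀ ⦃A B : Finset E⦄, A ⊆ B → h B ≤ h A) (hmn : ∀ ⦃A B : Finset E⦄, A ⊆ B → m B ≤ m A)
    (hh0 : ∀ A, 0 ≤ h A) (hm0 : ∀ A, 0 ≤ m A) :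
    (∑ A ∈ s.powerset, wgt x (fun i => 1 - x i) s A * h A)
      * (∑ A ∈ s.powerset, wgt x (fun i => 1 - x i) s A * m A)
    ≤ ∑ A ∈ s.powerset, wgt x (fun i => 1 - x i) s A * (h A * m A) := by
  induction s using Finset.induction_on generalizing h m with
  | empty => simp [wgt]
  | @insert e t he ih =>
    rw [sum_wgt_insert x (fun i => 1 - x i) he h, sum_wgt_insert x (fun i => 1 - x i) he m,
      sum_wgt_insert x (fun i => 1 - x i) he (fun A => h A * m A)]
    have hwnn : ∀ A : Finset E, 0 ≤ wgt x (fun i => 1 - x i) t A :=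
      wgt_nonneg hx0 (fun i => by linarith [hx1 i]) t
    set H1 := ∑ A ∈ t.powerset, wgt x (fun i => 1 - x i) t A * h (insert e A) with hH1
    set H0 := ∑ A ∈ t.powerset, wgt x (fun i => 1 - x i) t A * h A with hH0
    set M1 := ∑ A ∈ t.powerset, wgt x (fun i => 1 - x i) t A * m (insert e A) with hM1
    set M0 := ∑ A ∈ t.powerset, wgt x (fun i => 1 - x i) t A * m A with hM0
    have ih1 : H1 * M1 ≤ ∑ A ∈ t.powerset, wgt x (fun i => 1 - x i) t A
        * (h (insert e A) * m (insert e A)) :=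
      ih (fun A => h (insert e A)) (fun A => m (insert e A))
        (fun A B hAB => hh (Finset.insert_subset_insert e hAB))
        (fun A B hAB => hmn (Finset.insert_subset_insert e hAB))
        (fun A => hh0 _) (fun A => hm0 _)
    have ih0 : H0 * M0 ≤ ∑ A ∈ t.powerset, wgt x (fun i => 1 - x i) t A * (h A * m A) :=
      ih h m hh hmn hh0 hm0
    have hH : H1 ≤ H0 := Finset.sum_le_sum fun A _ =>
      mul_le_mul_of_nonneg_left (hh (Finset.subset_insert e A)) (hwnn A)
    have hM : M1 ≤ M0 := Finset.sum_le_sum fun A _ =>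
      mul_le_mul_of_nonneg_left (hmn (Finset.subset_insert e A)) (hwnn A)
    have hq0 : 0 ≤ x e := hx0 e
    have hq1 : x e ≤ 1 := hx1 e
    nlinarith [mul_nonneg (mul_nonneg hq0 (by linarith : (0:ℝ) ≤ 1 - x e))
        (mul_nonneg (sub_nonneg.2 hH) (sub_nonneg.2 hM)), ih1, ih0,
      mul_le_mul_of_nonneg_left ih1 hq0,
      mul_le_mul_of_nonneg_left ih0 (by linarith : (0:ℝ) ≤ 1 - x e)]

lemma sum_wgt_inter (y z : E → ℝ) (s : Finset E) (g : Finset E → ℝ) :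
    ∑ Q ∈ s.powerset, wgt y (fun i => 1 - y i) s Q *
      ∑ S ∈ s.powerset, wgt z (fun i => 1 - z i) s S * g (Q ∩ S)
    = ∑ A ∈ s.powerset, wgt (fun i => y i * z i) (fun i => 1 - y i * z i) s A * g A := by
  induction s using Finset.induction_on generalizing g with
  | empty => simp [wgt]
  | @insert e t he ih =>
    rw [sum_wgt_insert y (fun i => 1 - y i) he
      (fun Q => ∑ S ∈ (insert e t).powerset, wgt z (fun i => 1 - z i) (insert e t) S * g (Q ∩ S)),
      sum_wgt_insert (fun i => y i * z i) (fun i => 1 - y i * z i) he g]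
    have h1 : ∀ Q ∈ t.powerset,
        wgt y (fun i => 1 - y i) t Q *
          ∑ S ∈ (insert e t).powerset, wgt z (fun i => 1 - z i) (insert e t) S * g (insert e Q ∩ S)
        = wgt y (fun i => 1 - y i) t Q *
            (z e * ∑ S ∈ t.powerset, wgt z (fun i => 1 - z i) t S * g (insert e (Q ∩ S))
             + (1 - z e) * ∑ S ∈ t.powerset, wgt z (fun i => 1 - z i) t S * g (Q ∩ S)) := by
      intro Q hQ
      rw [sum_wgt_insert z (fun i => 1 - z i) he (fun S => g (insert e Q ∩ S))]
      have e1 : ∑ S ∈ t.powerset, wgt z (fun i => 1 - z i) t S * g (insert e Q ∩ insert e S)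
          = ∑ S ∈ t.powerset, wgt z (fun i => 1 - z i) t S * g (insert e (Q ∩ S)) := by
        refine Finset.sum_congr rfl fun S hS => ?_
        have : insert e Q ∩ insert e S = insert e (Q ∩ S) := by
          ext i; simp [Finset.mem_insert]; tauto
        rw [this]
      have e2 : ∑ S ∈ t.powerset, wgt z (fun i => 1 - z i) t S * g (insert e Q ∩ S)
          = ∑ S ∈ t.powerset, wgt z (fun i => 1 - z i) t S * g (Q ∩ S) := by
        refine Finset.sum_congr rfl fun S hS => ?_
        have heS : e ∉ S := fun hc => he (Finset.mem_powerset.1 hS hc)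
        rw [Finset.insert_inter_of_notMem heS]
      rw [e1, e2]
    have h2 : ∀ Q ∈ t.powerset,
        wgt y (fun i => 1 - y i) t Q *
          ∑ S ∈ (insert e t).powerset, wgt z (fun i => 1 - z i) (insert e t) S * g (Q ∩ S)
        = wgt y (fun i => 1 - y i) t Q *
            ((z e + (1 - z e)) * ∑ S ∈ t.powerset, wgt z (fun i => 1 - z i) t S * g (Q ∩ S)) := by
      intro Q hQ
      have heQ : e ∉ Q := fun hc => he (Finset.mem_powerset.1 hQ hc)
      rw [sum_wgt_insert z (fun i => 1 - z i) he (fun S => g (Q ∩ S))]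
      have e3 : ∑ S ∈ t.powerset, wgt z (fun i => 1 - z i) t S * g (Q ∩ insert e S)
          = ∑ S ∈ t.powerset, wgt z (fun i => 1 - z i) t S * g (Q ∩ S) :=
        Finset.sum_congr rfl fun S hS => by rw [Finset.inter_insert_of_notMem heQ]
      rw [e3]
      ring
    rw [Finset.sum_congr rfl h1, Finset.sum_congr rfl h2]
    simp only [mul_add, Finset.sum_add_distrib]
    have t1 : ∑ x ∈ t.powerset, wgt y (fun i => 1 - y i) t x *
          (z e * ∑ S ∈ t.powerset, wgt z (fun i => 1 - z i) t S * g (insert e (x ∩ S)))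
        = z e * ∑ x ∈ t.powerset, wgt y (fun i => 1 - y i) t x *
            ∑ S ∈ t.powerset, wgt z (fun i => 1 - z i) t S * g (insert e (x ∩ S)) := by
      rw [Finset.mul_sum]; exact Finset.sum_congr rfl fun x _ => by ring
    have t2 : ∑ x ∈ t.powerset, wgt y (fun i => 1 - y i) t x *
          ((1 - z e) * ∑ S ∈ t.powerset, wgt z (fun i => 1 - z i) t S * g (x ∩ S))
        = (1 - z e) * ∑ x ∈ t.powerset, wgt y (fun i => 1 - y i) t x *
            ∑ S ∈ t.powerset, wgt z (fun i => 1 - z i) t S * g (x ∩ S) := by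
      rw [Finset.mul_sum]; exact Finset.sum_congr rfl fun x _ => by ring
    have t3 : ∑ x ∈ t.powerset, wgt y (fun i => 1 - y i) t x *
          ((z e + (1 - z e)) * ∑ S ∈ t.powerset, wgt z (fun i => 1 - z i) t S * g (x ∩ S))
        = (z e + (1 - z e)) * ∑ x ∈ t.powerset, wgt y (fun i => 1 - y i) t x *
            ∑ S ∈ t.powerset, wgt z (fun i => 1 - z i) t S * g (x ∩ S) := by
      rw [Finset.mul_sum]; exact Finset.sum_congr rfl fun x _ => by ring
    rw [t1, t2, t3, ih (fun A => g (insert e A)), ih g]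
    ring

lemma prodWeight_eq_wgt (π : E → ℝ) (A : Finset E) :
    prodWeight π A = wgt π (fun i => 1 - π i) univ A := by
  rw [prodWeight, wgt, ← Finset.prod_mul_prod_compl A (fun i => if i ∈ A then π i else 1 - π i)]
  congr 1
  · exact Finset.prod_congr rfl fun i hi => by rw [if_pos hi]
  · exact Finset.prod_congr rfl fun i hi => by rw [if_neg (Finset.mem_compl.1 hi)]

lemma expec_eq_powerset (π : E → ℝ) (g : Finset E → ℝ) :
    expec π g = ∑ A ∈ (univ : Finset E).powerset, wgt π (fun i => 1 - π i) univ A * g A := by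
  rw [Finset.powerset_univ]
  exact Finset.sum_congr rfl fun A _ => by rw [prodWeight_eq_wgt]

lemma prodWeight_nonneg {π : E → ℝ} (h0 : ∀ i, 0 ≤ π i) (h1 : ∀ i, π i ≤ 1) (A : Finset E) :
    0 ≤ prodWeight π A := by
  rw [prodWeight_eq_wgt]
  exact wgt_nonneg h0 (fun i => by linarith [h1 i]) _ _

lemma sum_prodWeight (π : E → ℝ) : ∑ A : Finset E, prodWeight π A = 1 := by
  have : ∑ A : Finset E, prodWeight π A
      = ∑ A ∈ (univ : Finset E).powerset, wgt π (fun i => 1 - π i) univ A := by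
    rw [Finset.powerset_univ]
    exact Finset.sum_congr rfl fun A _ => by rw [prodWeight_eq_wgt]
  rw [this, sum_wgt]
  exact Finset.prod_eq_one fun i _ => by ring

lemma univ_eq_insert_compl (e : E) : (univ : Finset E) = insert e ({e}ᶜ : Finset E) := by
  ext i
  by_cases h : i = e <;> simp [h]

lemma not_mem_compl_self (e : E) : e ∉ ({e}ᶜ : Finset E) := by simp

lemma expec_mem (π : E → ℝ) (e : E) :
    expec π (fun A => if e ∈ A then (1:ℝ) else 0) = π e := by
  rw [expec_eq_powerset, univ_eq_insert_compl e,
    sum_wgt_insert π (fun i => 1 - π i) (not_mem_compl_self e)]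
  have e1 : ∑ A ∈ ({e}ᶜ : Finset E).powerset, wgt π (fun i => 1 - π i) ({e}ᶜ : Finset E) A *
      (if e ∈ insert e A then (1:ℝ) else 0)
      = ∑ A ∈ ({e}ᶜ : Finset E).powerset, wgt π (fun i => 1 - π i) ({e}ᶜ : Finset E) A :=
    Finset.sum_congr rfl fun A _ => by rw [if_pos (Finset.mem_insert_self e A), mul_one]
  have e2 : ∑ A ∈ ({e}ᶜ : Finset E).powerset, wgt π (fun i => 1 - π i) ({e}ᶜ : Finset E) A *
      (if e ∈ A then (1:ℝ) else 0) = 0 := by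
    refine Finset.sum_eq_zero fun A hA => ?_
    have heA : e ∉ A := fun hc => (not_mem_compl_self e) (Finset.mem_powerset.1 hA hc)
    rw [if_neg heA, mul_zero]
  rw [e1, e2, sum_wgt, Finset.prod_eq_one (fun i _ => by ring :
    ∀ i ∈ ({e}ᶜ : Finset E), π i + (1 - π i) = 1)]
  ring

lemma expec_card (π : E → ℝ) :
    expec π (fun A => (A.card : ℝ)) = ∑ e : E, π e := by
  have h1 : ∀ A : Finset E, (A.card : ℝ) = ∑ e : E, if e ∈ A then (1:ℝ) else 0 := by
    intro A
    rw [Finset.sum_ite_mem, Finset.univ_inter, Finset.sum_const, nsmul_eq_mul, mul_one]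
  have : expec π (fun A => (A.card : ℝ))
      = ∑ e : E, expec π (fun A => if e ∈ A then (1:ℝ) else 0) := by
    unfold expec
    rw [Finset.sum_comm]
    exact Finset.sum_congr rfl fun A _ => by simp only []; rw [h1 A, Finset.mul_sum]
  rw [this]
  exact Finset.sum_congr rfl fun e _ => expec_mem π e

lemma expec_add (π : E → ℝ) (g h : Finset E → ℝ) :
    expec π (fun A => g A + h A) = expec π g + expec π h := by
  unfold expec
  rw [← Finset.sum_add_distrib]
  exact Finset.sum_congr rfl fun A _ => by ring

lemma expec_mono {π : E → ℝ} (h0 : ∀ i, 0 ≤ π i) (h1 : ∀ i, π i ≤ 1)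
    {g h : Finset E → ℝ} (hgh : ∀ A, g A ≤ h A) : expec π g ≤ expec π h :=
  Finset.sum_le_sum fun A _ => mul_le_mul_of_nonneg_left (hgh A) (prodWeight_nonneg h0 h1 A)

lemma expec_const (π : E → ℝ) (a : ℝ) : expec π (fun _ => a) = a := by
  unfold expec
  rw [← Finset.sum_mul, sum_prodWeight, one_mul]

lemma expec_nonneg {π : E → ℝ} (h0 : ∀ i, 0 ≤ π i) (h1 : ∀ i, π i ≤ 1)
    {g : Finset E → ℝ} (hg : ∀ A, 0 ≤ g A) : 0 ≤ expec π g := by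
  have := expec_mono h0 h1 (g := fun _ => (0:ℝ)) (h := g) hg
  rwa [expec_const] at this

lemma expec_sum {ι : Type*} (π : E → ℝ) (s : Finset ι) (g : ι → Finset E → ℝ) :
    expec π (fun A => ∑ i ∈ s, g i A) = ∑ i ∈ s, expec π (g i) := by
  unfold expec
  have h1 : ∀ A : Finset E, prodWeight π A * ∑ i ∈ s, g i A
      = ∑ i ∈ s, prodWeight π A * g i A := fun A => Finset.mul_sum _ _ _
  rw [Finset.sum_congr rfl fun A _ => h1 A]
  exact Finset.sum_comm

lemma expec_one_sub (π : E → ℝ) (g : Finset E → ℝ) :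
    expec π (fun A => 1 - g A) = 1 - expec π g := by
  have h1 : expec π (fun A => (1 - g A) + g A) = expec π (fun _ => (1:ℝ)) := by
    congr 1
    funext A
    ring
  rw [expec_add, expec_const] at h1
  linarith

lemma expec_notcover {U : Type*} [Fintype U] [DecidableEq U]
    (π : E → ℝ) (Afam : E → Finset U) (u : U) :
    expec π (fun A => if u ∈ A.biUnion Afam then (0:ℝ) else 1)
      = ∏ i ∈ univ.filter (fun i => u ∈ Afam i), (1 - π i) := by
  classical
  set a' : E → ℝ := fun i => if u ∈ Afam i then 0 else π i with ha'
  have key : ∀ A : Finset E, prodWeight π A * (if u ∈ A.biUnion Afam then (0:ℝ) else 1)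
      = wgt a' (fun i => 1 - π i) univ A := by
    intro A
    by_cases hcov : u ∈ A.biUnion Afam
    · rw [if_pos hcov, mul_zero]
      obtain ⟨i0, hi0A, hi0u⟩ := Finset.mem_biUnion.1 hcov
      refine (Finset.prod_eq_zero (Finset.mem_univ i0) ?_).symm
      rw [if_pos hi0A, ha']
      simp [hi0u]
    · rw [if_neg hcov, mul_one, prodWeight_eq_wgt]
      refine Finset.prod_congr rfl fun i _ => ?_
      by_cases hiA : i ∈ A
      · rw [if_pos hiA, if_pos hiA, ha']
        have : u ∉ Afam i := fun hu => hcov (Finset.mem_biUnion.2 ⟨i, hiA, hu⟩)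
        simp [this]
      · rw [if_neg hiA, if_neg hiA]
  have : expec π (fun A => if u ∈ A.biUnion Afam then (0:ℝ) else 1)
      = ∑ A ∈ (univ : Finset E).powerset, wgt a' (fun i => 1 - π i) univ A := by
    rw [Finset.powerset_univ]
    exact Finset.sum_congr rfl fun A _ => key A
  rw [this, sum_wgt]
  rw [← Finset.prod_filter_mul_prod_filter_not univ (fun i => u ∈ Afam i)
    (fun i => a' i + (1 - π i))]
  have p2 : ∏ i ∈ univ.filter (fun i => ¬ u ∈ Afam i), (a' i + (1 - π i)) = 1 :=
    Finset.prod_eq_one fun i hi => by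
      have : ¬ u ∈ Afam i := (Finset.mem_filter.1 hi).2
      simp [ha', this]
  rw [p2, mul_one]
  exact Finset.prod_congr rfl fun i hi => by
    have : u ∈ Afam i := (Finset.mem_filter.1 hi).2
    simp [ha', this]

lemma cov_bound {t P q : ℝ} (ht : 0 ≤ t) (hP0 : 0 ≤ P) (hPe : P ≤ Real.exp (-t))
    (hq0 : 0 ≤ q) (hq1 : q ≤ 1) (hqt : q ≤ t) :
    (1 - 1 / Real.exp 1) * q ≤ 1 - P := by
  have he1 : (1:ℝ) < Real.exp 1 := by
    have := Real.add_one_le_exp 1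
    nlinarith [Real.exp_pos 1]
  have hep : (0:ℝ) < Real.exp 1 := Real.exp_pos 1
  have hexp : Real.exp (-1) = 1 / Real.exp 1 := by rw [Real.exp_neg, one_div]
  have hfac : 0 ≤ 1 - 1 / Real.exp 1 := by
    rw [sub_nonneg, div_le_one hep]; exact he1.le
  rcases le_or_gt t 1 with h1 | h1
  · have hconv := convexOn_exp.2 (Set.mem_univ (0:ℝ)) (Set.mem_univ (-1:ℝ))
      (by linarith : (0:ℝ) ≤ 1 - t) ht (by ring)
    simp only [smul_eq_mul, mul_zero, zero_add, Real.exp_zero, mul_one] at hconv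
    have h2 : Real.exp (-t) ≤ 1 - t + t * (1 / Real.exp 1) := by
      rw [← hexp]
      calc Real.exp (-t) = Real.exp (t * (-1)) := by ring_nf
        _ ≤ 1 - t + t * Real.exp (-1) := hconv
    nlinarith
  · have h2 : Real.exp (-t) ≤ Real.exp (-1) := Real.exp_le_exp.2 (by linarith)
    rw [hexp] at h2
    nlinarith

def gAux (mg : E → Finset E → ℝ) : List E → Finset E → Finset E → ℝ
  | [], _, _ => 0
  | e :: L, C, A => (if e ∈ A then (1:ℝ) else 0) * mg e (A ∩ C) + gAux mg L (insert e C) A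

def hAux (mg : E → Finset E → ℝ) : List E → Finset E → Finset E → Finset E → ℝ
  | [], _, _, _ => 0
  | e :: L, C, B, A => (if e ∈ B then (1:ℝ) else 0) * mg e (A ∩ C) + hAux mg L (insert e C) B A

def kAux (mg : E → Finset E → ℝ) (sel : Finset E → E → ℝ) : List E → Finset E → Finset E → ℝ
  | [], _, _ => 0
  | e :: L, C, A => sel A e * mg e (A ∩ C) + kAux mg sel L (insert e C) A

def marg {U : Type*} [Fintype U] [DecidableEq U] (Afam : E → Finset U) (e : E) (T : Finset E) : ℝ :=
  ((Afam e \ T.biUnion Afam).card : ℝ)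

lemma marg_nonneg {U : Type*} [Fintype U] [DecidableEq U] (Afam : E → Finset U) (e : E)
    (T : Finset E) : 0 ≤ marg Afam e T := Nat.cast_nonneg _

lemma marg_antitone {U : Type*} [Fintype U] [DecidableEq U] (Afam : E → Finset U) (e : E)
    {T T' : Finset E} (h : T ⊆ T') : marg Afam e T' ≤ marg Afam e T := by
  unfold marg
  exact_mod_cast Finset.card_le_card (Finset.sdiff_subset_sdiff (le_refl _)
    (Finset.biUnion_subset_biUnion_of_subset_left _ h))

lemma cover_insert {U : Type*} [Fintype U] [DecidableEq U] (Afam : E → Finset U) (e : E)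
    (T : Finset E) :
    (((insert e T).biUnion Afam).card : ℝ) = ((T.biUnion Afam).card : ℝ) + marg Afam e T := by
  rw [Finset.biUnion_insert, marg]
  rw [← Finset.card_sdiff_add_card (Afam e) (T.biUnion Afam)]
  push_cast
  ring

lemma gAux_telescope {U : Type*} [Fintype U] [DecidableEq U] (Afam : E → Finset U) :
    ∀ (L : List E) (C A : Finset E),
      (((A ∩ (C ∪ L.toFinset)).biUnion Afam).card : ℝ)
        = (((A ∩ C).biUnion Afam).card : ℝ) + gAux (marg Afam) L C A := by
  intro L
  induction L with
  | nil => intro C A; simp [gAux]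
  | cons e L ih =>
    intro C A
    have hset : C ∪ (e :: L).toFinset = insert e C ∪ L.toFinset := by
      ext i
      simp only [List.toFinset_cons, Finset.mem_union, Finset.mem_insert, List.mem_toFinset]
      tauto
    rw [hset, ih (insert e C) A, gAux]
    by_cases heA : e ∈ A
    · have : A ∩ insert e C = insert e (A ∩ C) := by
        ext i
        by_cases hie : i = e
        · subst hie; simp [heA]
        · simp [Finset.mem_insert, hie]
      rw [this, cover_insert, if_pos heA]
      ring
    · rw [Finset.inter_insert_of_notMem heA, if_neg heA]
      ring

lemma gAux_univ {U : Type*} [Fintype U] [DecidableEq U] (Afam : E → Finset U) (A : Finset E) :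
    ((A.biUnion Afam).card : ℝ) = gAux (marg Afam) (univ : Finset E).toList ∅ A := by
  have := gAux_telescope Afam (univ : Finset E).toList ∅ A
  rw [Finset.toList_toFinset] at this
  simpa using this

lemma hAux_le_gAux (mg : E → Finset E → ℝ)
    (hmg0 : ∀ e T, 0 ≤ mg e T) (hmga : ∀ (e : E) {T T' : Finset E}, T ⊆ T' → mg e T' ≤ mg e T) :
    ∀ (L : List E) (C : Finset E) {B A : Finset E}, B ⊆ A →
      hAux mg L C B A ≤ gAux mg L C B := by
  intro L
  induction L with
  | nil => intro C B A _; simp [hAux, gAux]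
  | cons e L ih =>
    intro C B A hBA
    rw [hAux, gAux]
    have h1 : (if e ∈ B then (1:ℝ) else 0) * mg e (A ∩ C)
        ≤ (if e ∈ B then (1:ℝ) else 0) * mg e (B ∩ C) := by
      by_cases h : e ∈ B
      · simp only [if_pos h, one_mul]
        exact hmga e (Finset.inter_subset_inter hBA (le_refl _))
      · simp [h]
    linarith [ih (insert e C) hBA]

lemma selProb_nonneg {𝓘 : Set (Finset E)} (π : CRS E 𝓘) (x : E → ℝ) (A : Finset E) (e : E) :
    0 ≤ π.selProb x A e :=
  Finset.sum_nonneg fun B _ => by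
    by_cases h : e ∈ B <;> simp [h, π.nonneg]

lemma selProb_eq_zero {𝓘 : Set (Finset E)} (π : CRS E 𝓘) (x : E → ℝ) {A : Finset E} {e : E}
    (he : e ∉ A) : π.selProb x A e = 0 :=
  Finset.sum_eq_zero fun B _ => by
    by_cases h : e ∈ B
    · rw [if_pos h]
      by_contra h0
      exact he (π.subset_of x A B h0 h)
    · rw [if_neg h]

lemma sum_out_hAux {𝓘 : Set (Finset E)} (π : CRS E 𝓘) (x : E → ℝ)
    (mg : E → Finset E → ℝ) :
    ∀ (L : List E) (C A : Finset E),
      ∑ B : Finset E, π.out x A B * hAux mg L C B A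
        = kAux mg (fun A' e => π.selProb x A' e) L C A := by
  intro L
  induction L with
  | nil => intro C A; simp [hAux, kAux, π.sum_one]
  | cons e L ih =>
    intro C A
    simp only [hAux, kAux, mul_add, Finset.sum_add_distrib]
    rw [ih (insert e C) A]
    congr 1
    rw [CRS.selProb, Finset.sum_mul]
    exact Finset.sum_congr rfl fun B _ => by
      by_cases h : e ∈ B <;> simp [h]

lemma core_step {𝓘 : Set (Finset E)} (π : CRS E 𝓘) (c : ℝ) (x : E → ℝ)
    (hx0 : ∀ i, 0 ≤ x i) (hx1 : ∀ i, x i ≤ 1) (hxP : x ∈ systemPolytope 𝓘)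
    (hbal : π.Balanced c) (hmono : π.MonotoneScheme)
    (mg : E → Finset E → ℝ) (hmg0 : ∀ e T, 0 ≤ mg e T)
    (hmga : ∀ (e : E) {T T' : Finset E}, T ⊆ T' → mg e T' ≤ mg e T)
    (e : E) (C : Finset E) (heC : e ∉ C) :
    c * expec x (fun A => (if e ∈ A then (1:ℝ) else 0) * mg e (A ∩ C))
      ≤ expec x (fun A => π.selProb x A e * mg e (A ∩ C)) := by
  classical
  set t : Finset E := ({e}ᶜ : Finset E) with ht
  have het : e ∉ t := not_mem_compl_self e
  set W : Finset E → ℝ := wgt x (fun i => 1 - x i) t with hW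
  have hWnn : ∀ A, 0 ≤ W A := fun A => wgt_nonneg hx0 (fun i => by linarith [hx1 i]) t A
  set h : Finset E → ℝ := fun A => π.selProb x (insert e A) e with hh
  set m : Finset E → ℝ := fun A => mg e (A ∩ C) with hm
  have dInd : expec x (fun A => (if e ∈ A then (1:ℝ) else 0) * mg e (A ∩ C))
      = x e * ∑ A ∈ t.powerset, W A * m A := by
    rw [expec_eq_powerset, univ_eq_insert_compl e,
      sum_wgt_insert x (fun i => 1 - x i) het
        (fun A => (if e ∈ A then (1:ℝ) else 0) * mg e (A ∩ C))]
    have e1 : ∑ A ∈ t.powerset, wgt x (fun i => 1 - x i) t A *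
        ((if e ∈ insert e A then (1:ℝ) else 0) * mg e ((insert e A) ∩ C))
        = ∑ A ∈ t.powerset, W A * m A := by
      refine Finset.sum_congr rfl fun A hA => ?_
      rw [if_pos (Finset.mem_insert_self e A), Finset.insert_inter_of_notMem heC, one_mul]
    have e2 : ∑ A ∈ t.powerset, wgt x (fun i => 1 - x i) t A *
        ((if e ∈ A then (1:ℝ) else 0) * mg e (A ∩ C)) = 0 := by
      refine Finset.sum_eq_zero fun A hA => ?_
      have heA : e ∉ A := fun hc => het (Finset.mem_powerset.1 hA hc)
      rw [if_neg heA, zero_mul, mul_zero]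
    rw [e1, e2, mul_zero, add_zero]
  have dSel : expec x (fun A => π.selProb x A e * mg e (A ∩ C))
      = x e * ∑ A ∈ t.powerset, W A * (h A * m A) := by
    rw [expec_eq_powerset, univ_eq_insert_compl e,
      sum_wgt_insert x (fun i => 1 - x i) het (fun A => π.selProb x A e * mg e (A ∩ C))]
    have e1 : ∑ A ∈ t.powerset, wgt x (fun i => 1 - x i) t A *
        (π.selProb x (insert e A) e * mg e ((insert e A) ∩ C))
        = ∑ A ∈ t.powerset, W A * (h A * m A) := by
      refine Finset.sum_congr rfl fun A hA => ?_
      rw [Finset.insert_inter_of_notMem heC]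
    have e2 : ∑ A ∈ t.powerset, wgt x (fun i => 1 - x i) t A *
        (π.selProb x A e * mg e (A ∩ C)) = 0 := by
      refine Finset.sum_eq_zero fun A hA => ?_
      have heA : e ∉ A := fun hc => het (Finset.mem_powerset.1 hA hc)
      rw [selProb_eq_zero π x heA, zero_mul, mul_zero]
    rw [e1, e2, mul_zero, add_zero]
  rw [dInd, dSel]
  rcases eq_or_lt_of_le (hx0 e) with hxe | hxe
  · rw [← hxe]; simp
  have dBal : expec x (fun A => π.selProb x A e)
      = x e * ∑ A ∈ t.powerset, W A * h A := by
    rw [expec_eq_powerset, univ_eq_insert_compl e,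
      sum_wgt_insert x (fun i => 1 - x i) het (fun A => π.selProb x A e)]
    have e2 : ∑ A ∈ t.powerset, wgt x (fun i => 1 - x i) t A * π.selProb x A e = 0 := by
      refine Finset.sum_eq_zero fun A hA => ?_
      have heA : e ∉ A := fun hc => het (Finset.mem_powerset.1 hA hc)
      rw [selProb_eq_zero π x heA, mul_zero]
    rw [e2, mul_zero, add_zero]
  have hbal' := hbal x hxP e hxe
  rw [dBal] at hbal'
  have hSH : c ≤ ∑ A ∈ t.powerset, W A * h A := by
    have := (mul_le_mul_iff_right₀ hxe).1 (by linarith : x e * c ≤ x e * ∑ A ∈ t.powerset, W A * h A)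
    linarith
  have hhar := harris x hx0 hx1 t h m
    (fun A B hAB => hmono x (insert e A) (insert e B) (Finset.insert_subset_insert e hAB) e
      (Finset.mem_insert_self e A))
    (fun A B hAB => hmga e (Finset.inter_subset_inter hAB (le_refl C)))
    (fun A => selProb_nonneg π x _ e)
    (fun A => hmg0 e _)
  have hMnn : 0 ≤ ∑ A ∈ t.powerset, W A * m A :=
    Finset.sum_nonneg fun A _ => mul_nonneg (hWnn A) (hmg0 e _)
  have hstep : c * ∑ A ∈ t.powerset, W A * m A ≤ ∑ A ∈ t.powerset, W A * (h A * m A) := by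
    nlinarith
  nlinarith [hx0 e]

lemma expec_kAux_ge {𝓘 : Set (Finset E)} (π : CRS E 𝓘) (c : ℝ) (x : E → ℝ)
    (hx0 : ∀ i, 0 ≤ x i) (hx1 : ∀ i, x i ≤ 1) (hxP : x ∈ systemPolytope 𝓘)
    (hbal : π.Balanced c) (hmono : π.MonotoneScheme)
    (mg : E → Finset E → ℝ) (hmg0 : ∀ e T, 0 ≤ mg e T)
    (hmga : ∀ (e : E) {T T' : Finset E}, T ⊆ T' → mg e T' ≤ mg e T) :
    ∀ (L : List E) (C : Finset E), L.Nodup → (∀ e ∈ L, e ∉ C) →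
      c * expec x (fun A => gAux mg L C A)
        ≤ expec x (fun A => kAux mg (fun A' e => π.selProb x A' e) L C A) := by
  intro L
  induction L with
  | nil =>
    intro C _ _
    simp only [gAux, kAux]
    simp [expec]
  | cons e L ih =>
    intro C hnd hC
    have h1 : expec x (fun A => gAux mg (e :: L) C A)
        = expec x (fun A => (if e ∈ A then (1:ℝ) else 0) * mg e (A ∩ C))
          + expec x (fun A => gAux mg L (insert e C) A) := by
      rw [← expec_add]; rfl
    have h2 : expec x (fun A => kAux mg (fun A' e => π.selProb x A' e) (e :: L) C A)
        = expec x (fun A => π.selProb x A e * mg e (A ∩ C))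
          + expec x (fun A => kAux mg (fun A' e => π.selProb x A' e) L (insert e C) A) := by
      rw [← expec_add]; rfl
    rw [h1, h2, mul_add]
    have hcore := core_step π c x hx0 hx1 hxP hbal hmono mg hmg0 hmga e C
      (hC e List.mem_cons_self)
    have hih := ih (insert e C) (List.nodup_cons.1 hnd).2 (fun e' he' => by
      rw [Finset.mem_insert]
      push_neg
      exact ⟨fun h => (List.nodup_cons.1 hnd).1 (h ▸ he'), hC e' (List.mem_cons_of_mem e he')⟩)
    linarith

end Sparsify

open Sparsify in
/-- Sparsification for coverage objectives via monotone contention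
resolution: if the coverage function is `f(S) = |⋃_{i ∈ S} A_i|` over a finite universe
`U`, the set system `𝓘` is downward closed with rank `r`, and `P_𝓘` admits a `c`-balanced
monotone CRS, then there is a random subset `Q` (given by a distribution `μ`, independent
of `R`) with `E[|Q|] ≤ r/p` whose expected sparsified optimum is at least
`c (1 − 1/e)` times the stochastic optimum. -/
theorem stmt_19 {U : Type*} [Fintype U] [DecidableEq U]
    (Afam : E → Finset U)
    (𝓘 : Set (Finset E))
    (hdown : ∀ S ∈ 𝓘, ∀ T ⊆ S, T ∈ 𝓘)
    (r : ℕ) (hr : IsGreatest {n : ℕ | ∃ S ∈ 𝓘, S.card = n} r)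
    (p : ℝ) (hp0 : 0 < p) (hp1 : p ≤ 1)
    (c : ℝ) (π : CRS E 𝓘) (hbal : π.Balanced c) (hmono : π.MonotoneScheme) :
    ∃ μ : Finset E → ℝ,
      (∀ Q, 0 ≤ μ Q) ∧ (∑ Q : Finset E, μ Q = 1) ∧
      (∑ Q : Finset E, μ Q * (Q.card : ℝ) ≤ (r : ℝ) / p) ∧
      (c * (1 - 1 / Real.exp 1) *
          expec (fun _ => p)
            (fun S => bestVal 𝓘 (fun T => ((T.biUnion Afam).card : ℝ)) S)
        ≤ ∑ Q : Finset E, μ Q *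
            expec (fun _ => p)
              (fun S => bestVal 𝓘 (fun T => ((T.biUnion Afam).card : ℝ)) (Q ∩ S))) := by
  classical
  set f : Finset E → ℝ := fun T => ((T.biUnion Afam).card : ℝ) with hf
  have hfac : 0 ≤ 1 - 1 / Real.exp 1 := by
    have he1 : (1:ℝ) < Real.exp 1 := by
      have := Real.add_one_le_exp 1
      nlinarith [Real.exp_pos 1]
    rw [sub_nonneg, div_le_one (Real.exp_pos 1)]
    exact he1.le
  have hp0' : ∀ _i : E, (0:ℝ) ≤ p := fun _ => hp0.le
  have hp1' : ∀ _i : E, p ≤ (1:ℝ) := fun _ => hp1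
  have hEmpty : (∅ : Finset E) ∈ 𝓘 := by
    obtain ⟨S, hS, _⟩ := hr.1
    exact hdown S hS ∅ (Finset.empty_subset S)
  have hbv_ge : ∀ S T : Finset E, T ⊆ S → T ∈ 𝓘 → f T ≤ bestVal 𝓘 f S := by
    intro S T h1 h2
    exact le_csSup ((Set.toFinite _).image f).bddAbove ⟨T, ⟨h1, h2⟩, rfl⟩
  have hf0 : f ∅ = 0 := by simp [hf]
  have hbv0 : ∀ S, 0 ≤ bestVal 𝓘 f S := by
    intro S
    have := hbv_ge S ∅ (Finset.empty_subset S) hEmpty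
    rw [hf0] at this
    exact this
  have hbv_mem : ∀ S : Finset E, ∃ T, T ⊆ S ∧ T ∈ 𝓘 ∧ f T = bestVal 𝓘 f S := by
    intro S
    have hne : (f '' {T | T ⊆ S ∧ T ∈ 𝓘}).Nonempty :=
      ⟨f ∅, ⟨∅, ⟨Finset.empty_subset S, hEmpty⟩, rfl⟩⟩
    have hfin : (f '' {T | T ⊆ S ∧ T ∈ 𝓘}).Finite := (Set.toFinite _).image f
    obtain ⟨T, ⟨hTS, hTI⟩, hfT⟩ := hne.csSup_mem hfin
    exact ⟨T, hTS, hTI, hfT⟩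
  choose Tsel hTsub hTmem hTval using hbv_mem
  rcases le_or_gt c 0 with hc | hc
  · -- trivial case: c ≤ 0, take Q = ∅ deterministically
    refine ⟨fun Q => if Q = ∅ then 1 else 0, fun Q => by positivity, by simp, ?_, ?_⟩
    · rw [Finset.sum_congr rfl (fun Q _ => by
        by_cases h : Q = ∅ <;> simp [h] : ∀ Q ∈ (univ : Finset (Finset E)),
          (if Q = ∅ then (1:ℝ) else 0) * (Q.card : ℝ)
            = (if Q = ∅ then (0:ℝ) else 0))]
      simp
      positivity
    · have hRHS : ∑ Q : Finset E, (if Q = ∅ then (1:ℝ) else 0) *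
          expec (fun _ => p) (fun S => bestVal 𝓘 f (Q ∩ S))
          = expec (fun _ => p) (fun S => bestVal 𝓘 f (∅ ∩ S)) := by
        rw [Finset.sum_eq_single ∅]
        · simp
        · intro Q _ hQ
          simp [hQ]
        · intro h
          exact absurd (Finset.mem_univ ∅) h
      rw [hRHS]
      have h1 : 0 ≤ expec (fun _ => p) (fun S => bestVal 𝓘 f (∅ ∩ S)) :=
        expec_nonneg hp0' hp1' (fun S => hbv0 _)
      have h2 : 0 ≤ expec (fun _ => p) (fun S => bestVal 𝓘 f S) :=
        expec_nonneg hp0' hp1' (fun S => hbv0 _)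
      have h3 : c * ((1 - 1 / Real.exp 1) * expec (fun _ => p) (fun S => bestVal 𝓘 f S)) ≤ 0 :=
        mul_nonpos_of_nonpos_of_nonneg hc (mul_nonneg hfac h2)
      have h4 : c * (1 - 1 / Real.exp 1) * expec (fun _ => p) (fun S => bestVal 𝓘 f S)
          = c * ((1 - 1 / Real.exp 1) * expec (fun _ => p) (fun S => bestVal 𝓘 f S)) := by ring
      rw [h4]
      linarith
  -- main case: c > 0
  set xv : E → ℝ := fun e => expec (fun _ => p) (fun S => if e ∈ Tsel S then (1:ℝ) else 0)
    with hxv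
  have hxv0 : ∀ e, 0 ≤ xv e := fun e =>
    expec_nonneg hp0' hp1' (fun S => by positivity)
  have hxvp : ∀ e, xv e ≤ p := by
    intro e
    have hmono' : ∀ S : Finset E, (if e ∈ Tsel S then (1:ℝ) else 0) ≤ (if e ∈ S then 1 else 0) := by
      intro S
      by_cases h : e ∈ Tsel S
      · rw [if_pos h, if_pos (hTsub S h)]
      · rw [if_neg h]
        positivity
    calc xv e ≤ expec (fun _ => p) (fun S => if e ∈ S then (1:ℝ) else 0) :=
          expec_mono hp0' hp1' hmono'
      _ = p := expec_mem _ e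
  have hxv1 : ∀ e, xv e ≤ 1 := fun e => le_trans (hxvp e) hp1
  have hxP : xv ∈ systemPolytope 𝓘 := by
    have hxc : xv = Finset.centerMass (univ : Finset (Finset E)) (prodWeight (fun _ => p))
        (fun S => (fun e => if e ∈ Tsel S then (1:ℝ) else 0)) := by
      rw [Finset.centerMass, sum_prodWeight, inv_one, one_smul]
      funext e
      rw [hxv]
      simp only [expec, Finset.sum_apply, Pi.smul_apply, smul_eq_mul]
    rw [hxc]
    exact Finset.centerMass_mem_convexHull _
      (fun S _ => prodWeight_nonneg hp0' hp1' S)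
      (by rw [sum_prodWeight]; norm_num)
      (fun S _ => ⟨Tsel S, hTmem S, rfl⟩)
  have hsum_xv : ∑ e : E, xv e ≤ (r : ℝ) := by
    have h1 : ∑ e : E, xv e
        = expec (fun _ => p) (fun S => ((Tsel S).card : ℝ)) := by
      rw [show (fun S : Finset E => ((Tsel S).card : ℝ))
          = fun S : Finset E => ∑ e : E, (if e ∈ Tsel S then (1:ℝ) else 0) from
        funext fun S => by
          rw [Finset.sum_ite_mem, Finset.univ_inter, Finset.sum_const, nsmul_eq_mul, mul_one]]
      rw [expec_sum]
    have h2 : expec (fun _ => p) (fun S => ((Tsel S).card : ℝ))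
        ≤ expec (fun _ : E => p) (fun _ => (r : ℝ)) := by
      refine expec_mono hp0' hp1' fun S => ?_
      exact_mod_cast hr.2 ⟨Tsel S, hTmem S, rfl⟩
    rw [expec_const] at h2
    linarith
  set yv : E → ℝ := fun e => xv e / p with hyv
  have hyv0 : ∀ e, 0 ≤ yv e := fun e => div_nonneg (hxv0 e) hp0.le
  have hyv1 : ∀ e, yv e ≤ 1 := fun e => by
    rw [hyv, div_le_one hp0]
    exact hxvp e
  have hyvx : ∀ e, yv e * p = xv e := fun e => div_mul_cancel₀ _ hp0.ne'
  refine ⟨prodWeight yv, prodWeight_nonneg hyv0 hyv1, sum_prodWeight yv, ?_, ?_⟩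
  · have : ∑ Q : Finset E, prodWeight yv Q * (Q.card : ℝ) = ∑ e : E, yv e := expec_card yv
    rw [this]
    have h1 : ∑ e : E, yv e = (∑ e : E, xv e) / p := by
      rw [Finset.sum_div]
    rw [h1]
    exact (div_le_div_iff_of_pos_right hp0).2 hsum_xv
  · -- main inequality
    have hinter : ∑ Q : Finset E, prodWeight yv Q *
        expec (fun _ => p) (fun S => bestVal 𝓘 f (Q ∩ S))
        = expec xv (fun A => bestVal 𝓘 f A) := by
      have conv1 : ∀ F : Finset E → ℝ,
          ∑ Q ∈ (univ : Finset E).powerset, F Q = ∑ Q : Finset E, F Q := fun F => by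
        rw [Finset.powerset_univ]
      have step1 : ∑ Q : Finset E, prodWeight yv Q *
          expec (fun _ => p) (fun S => bestVal 𝓘 f (Q ∩ S))
          = ∑ Q ∈ (univ : Finset E).powerset, wgt yv (fun i => 1 - yv i) univ Q *
              ∑ S ∈ (univ : Finset E).powerset,
                wgt (fun _ => p) (fun i => 1 - p) univ S * bestVal 𝓘 f (Q ∩ S) := by
        rw [conv1 (fun Q => wgt yv (fun i => 1 - yv i) univ Q *
              ∑ S ∈ (univ : Finset E).powerset,
                wgt (fun _ => p) (fun i => 1 - p) univ S * bestVal 𝓘 f (Q ∩ S))]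
        refine Finset.sum_congr rfl fun Q _ => ?_
        rw [prodWeight_eq_wgt, expec_eq_powerset]
      rw [step1, sum_wgt_inter yv (fun _ => p) univ (fun A => bestVal 𝓘 f A),
        expec_eq_powerset]
      refine Finset.sum_congr rfl fun A _ => ?_
      congr 1
      unfold wgt
      refine Finset.prod_congr rfl fun i _ => ?_
      by_cases h : i ∈ A <;> simp [h, hyvx i]
    rw [hinter]
    -- chain of inequalities
    set l : List E := (univ : Finset E).toList with hl
    set mg : E → Finset E → ℝ := marg Afam with hmg
    have hmg0 : ∀ e T, 0 ≤ mg e T := fun e T => marg_nonneg Afam e T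
    have hmga : ∀ (e : E) {T T' : Finset E}, T ⊆ T' → mg e T' ≤ mg e T :=
      fun e _ _ h => marg_antitone Afam e h
    have step2 : expec xv (fun A => ∑ B : Finset E, π.out xv A B * f B)
        ≤ expec xv (fun A => bestVal 𝓘 f A) := by
      refine expec_mono hxv0 hxv1 fun A => ?_
      calc ∑ B : Finset E, π.out xv A B * f B
          ≤ ∑ B : Finset E, π.out xv A B * bestVal 𝓘 f A := by
            refine Finset.sum_le_sum fun B _ => ?_
            by_cases h0 : π.out xv A B = 0
            · rw [h0, zero_mul, zero_mul]
            · exact mul_le_mul_of_nonneg_left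
                (hbv_ge A B (π.subset_of xv A B h0) (π.indep_of xv A B h0))
                (π.nonneg xv A B)
        _ = bestVal 𝓘 f A := by rw [← Finset.sum_mul, π.sum_one, one_mul]
    have step3 : expec xv (fun A => kAux mg (fun A' e => π.selProb xv A' e) l ∅ A)
        ≤ expec xv (fun A => ∑ B : Finset E, π.out xv A B * f B) := by
      refine expec_mono hxv0 hxv1 fun A => ?_
      rw [← sum_out_hAux π xv mg l ∅ A]
      refine Finset.sum_le_sum fun B _ => ?_
      by_cases h0 : π.out xv A B = 0
      · rw [h0, zero_mul, zero_mul]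
      · refine mul_le_mul_of_nonneg_left ?_ (π.nonneg xv A B)
        have hBA : B ⊆ A := π.subset_of xv A B h0
        calc hAux mg l ∅ B A ≤ gAux mg l ∅ B := hAux_le_gAux mg hmg0 hmga l ∅ hBA
          _ = f B := (gAux_univ Afam B).symm
    have step4 : c * expec xv (fun A => gAux mg l ∅ A)
        ≤ expec xv (fun A => kAux mg (fun A' e => π.selProb xv A' e) l ∅ A) :=
      expec_kAux_ge π c xv hxv0 hxv1 hxP hbal hmono mg hmg0 hmga l ∅
        (Finset.nodup_toList univ) (fun e _ => Finset.notMem_empty e)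
    have step5 : expec xv (fun A => gAux mg l ∅ A) = expec xv f := by
      unfold expec
      refine Finset.sum_congr rfl fun A _ => ?_
      exact congrArg (fun z => prodWeight xv A * z) (gAux_univ Afam A).symm
    -- correlation gap step
    have step6 : (1 - 1 / Real.exp 1) * expec (fun _ => p) (fun S => bestVal 𝓘 f S)
        ≤ expec xv f := by
      have hcovexp : expec xv f = ∑ u : U,
          (1 - ∏ i ∈ univ.filter (fun i => u ∈ Afam i), (1 - xv i)) := by
        have h1 : expec xv f = ∑ u : U, expec xv
            (fun A => if u ∈ A.biUnion Afam then (1:ℝ) else 0) := by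
          rw [show f = fun A => ∑ u : U, (if u ∈ A.biUnion Afam then (1:ℝ) else 0)
            from funext fun A => by
              rw [hf]
              simp only []
              rw [Finset.sum_ite_mem, Finset.univ_inter, Finset.sum_const, nsmul_eq_mul, mul_one]]
          rw [expec_sum]
        rw [h1]
        refine Finset.sum_congr rfl fun u _ => ?_
        have h2 : (fun A : Finset E => if u ∈ A.biUnion Afam then (1:ℝ) else 0)
            = fun A : Finset E => 1 - (if u ∈ A.biUnion Afam then (0:ℝ) else 1) := by
          funext A
          by_cases h : u ∈ A.biUnion Afam <;> simp [h]
        rw [h2, expec_one_sub, expec_notcover]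
      have hbvexp : expec (fun _ => p) (fun S => bestVal 𝓘 f S) = ∑ u : U,
          expec (fun _ => p) (fun S => if u ∈ (Tsel S).biUnion Afam then (1:ℝ) else 0) := by
        have h1 : (fun S => bestVal 𝓘 f S)
            = fun S => ∑ u : U, (if u ∈ (Tsel S).biUnion Afam then (1:ℝ) else 0) := by
          funext S
          rw [← hTval S, hf]
          simp only []
          rw [Finset.sum_ite_mem, Finset.univ_inter, Finset.sum_const, nsmul_eq_mul, mul_one]
        rw [h1, expec_sum]
      rw [hcovexp, hbvexp, Finset.mul_sum]
      refine Finset.sum_le_sum fun u _ => ?_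
      set cu : Finset E := univ.filter (fun i => u ∈ Afam i) with hcu
      set tq : ℝ := ∑ i ∈ cu, xv i with htq
      have htq0 : 0 ≤ tq := Finset.sum_nonneg fun i _ => hxv0 i
      have hP0 : 0 ≤ ∏ i ∈ cu, (1 - xv i) :=
        Finset.prod_nonneg fun i _ => by linarith [hxv1 i]
      have hPe : ∏ i ∈ cu, (1 - xv i) ≤ Real.exp (-tq) := by
        rw [htq, ← Finset.sum_neg_distrib, Real.exp_sum]
        refine Finset.prod_le_prod (fun i _ => by linarith [hxv1 i]) fun i _ => ?_
        have := Real.add_one_le_exp (-xv i)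
        linarith
      set q : ℝ := expec (fun _ => p)
        (fun S => if u ∈ (Tsel S).biUnion Afam then (1:ℝ) else 0) with hq
      have hq0 : 0 ≤ q := expec_nonneg hp0' hp1' fun S => by positivity
      have hq1 : q ≤ 1 := by
        have := expec_mono hp0' hp1'
          (g := fun S => if u ∈ (Tsel S).biUnion Afam then (1:ℝ) else 0)
          (h := fun _ => (1:ℝ)) (fun S => by by_cases h : u ∈ (Tsel S).biUnion Afam <;> simp [h])
        rwa [expec_const] at this
      have hqt : q ≤ tq := by
        have hpt : ∀ S : Finset E, (if u ∈ (Tsel S).biUnion Afam then (1:ℝ) else 0)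
            ≤ ∑ i ∈ cu, (if i ∈ Tsel S then (1:ℝ) else 0) := by
          intro S
          by_cases h : u ∈ (Tsel S).biUnion Afam
          · rw [if_pos h]
            obtain ⟨i0, hi0T, hi0u⟩ := Finset.mem_biUnion.1 h
            have hi0cu : i0 ∈ cu := by
              rw [hcu, Finset.mem_filter]
              exact ⟨Finset.mem_univ i0, hi0u⟩
            have := Finset.single_le_sum
              (f := fun i => if i ∈ Tsel S then (1:ℝ) else 0)
              (fun i _ => by positivity) hi0cu
            simpa [hi0T] using this
          · rw [if_neg h]
            exact Finset.sum_nonneg fun i _ => by positivity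
        calc q ≤ expec (fun _ => p)
              (fun S => ∑ i ∈ cu, (if i ∈ Tsel S then (1:ℝ) else 0)) :=
            expec_mono hp0' hp1' hpt
          _ = ∑ i ∈ cu, xv i := by rw [expec_sum]
          _ = tq := rfl
      exact cov_bound htq0 hP0 hPe hq0 hq1 hqt
    -- put it together
    have final1 : c * ((1 - 1 / Real.exp 1) *
        expec (fun _ => p) (fun S => bestVal 𝓘 f S)) ≤ c * expec xv f :=
      mul_le_mul_of_nonneg_left step6 hc.le
    calc c * (1 - 1 / Real.exp 1) * expec (fun _ => p) (fun S => bestVal 𝓘 f S)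
        = c * ((1 - 1 / Real.exp 1) * expec (fun _ => p) (fun S => bestVal 𝓘 f S)) := by ring
      _ ≤ c * expec xv f := final1
      _ = c * expec xv (fun A => gAux mg l ∅ A) := by rw [step5]
      _ ≤ expec xv (fun A => kAux mg (fun A' e => π.selProb xv A' e) l ∅ A) := step4
      _ ≤ expec xv (fun A => ∑ B : Finset E, π.out xv A B * f B) := step3
      _ ≤ expec xv (fun A => bestVal 𝓘 f A) := step2
end
end
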